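/- arXiv:1006.1960 — 5 statements merged into one kernel-verified Lean document; each statement's English description precedes it below -/
import Mathlib

section
/- Let B be a Boolean algebra and τ : B → B a state-operator (i.e., τ(0)=0, τ(x*) = τ(x)*, τ(x⊕y) = τ(x) ⊕ τ(y ⊙ (x ⊙ y)*), and τ(τ(x) ⊕ τ(y)) = τ(x) ⊕ τ(y)). Then τ is a state-morphism-operator, i.e., τ is a Boolean algebra endomorphism with τ ∘ τ = τ. -/
/-- A state-operator on a Boolean algebra is a
state-morphism-operator, i.e., an idempotent Boolean endomorphism. -/
theorem state_operator_on_boolean_algebra_is_state_morphism_operator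
    {B : Type*} [BooleanAlgebra B] (τ : B → B)
    (h0 : τ ⊥ = ⊥)
    (hstar : ∀ x, τ xᶜ = (τ x)ᶜ)
    (hoplus : ∀ x y, τ (x ⊔ y) = τ x ⊔ τ (y ⊓ (x ⊓ y)ᶜ))
    (hinternal : ∀ x y, τ (τ x ⊔ τ y) = τ x ⊔ τ y) :
    (∀ x y, τ (x ⊔ y) = τ x ⊔ τ y) ∧
    (∀ x y, τ (x ⊓ y) = τ x ⊓ τ y) ∧
    (∀ x, τ xᶜ = (τ x)ᶜ) ∧
    τ ⊥ = ⊥ ∧ τ ⊤ = ⊤ ∧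
    (∀ x, τ (τ x) = τ x) := by
  -- decomposition: τ y = τ (x ⊓ y) ⊔ τ (y ⊓ (x ⊓ y)ᶜ)
  have hdec : ∀ x y : B, τ y = τ (x ⊓ y) ⊔ τ (y ⊓ (x ⊓ y)ᶜ) := by
    intro x y
    have h := hoplus (x ⊓ y) y
    have h1 : (x ⊓ y) ⊔ y = y := sup_eq_right.mpr inf_le_right
    have h2 : x ⊓ y ⊓ y = x ⊓ y := inf_eq_left.mpr inf_le_right
    rw [h1, h2] at h
    exact h
  have hle : ∀ x y : B, τ (x ⊓ y) ≤ τ x := by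
    intro x y
    have h := hdec y x
    have : y ⊓ x = x ⊓ y := inf_comm y x
    rw [this] at h
    exact le_sup_left.trans_eq h.symm
  have hsup : ∀ x y : B, τ (x ⊔ y) = τ x ⊔ τ y := by
    intro x y
    rw [hoplus x y, hdec x y]
    rw [← sup_assoc]
    congr 1
    exact (sup_eq_left.mpr (hle x y)).symm
  have hinf : ∀ x y : B, τ (x ⊓ y) = τ x ⊓ τ y := by
    intro x y
    have : x ⊓ y = (xᶜ ⊔ yᶜ)ᶜ := by simp
    rw [this, hstar, hsup, hstar, hstar]
    simp
  refine ⟨hsup, hinf, hstar, h0, ?_, ?_⟩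
  · have : (⊤ : B) = ⊥ᶜ := by simp
    rw [this, hstar, h0, compl_bot]
  · intro x
    have h := hinternal x ⊥
    rw [h0, sup_bot_eq] at h
    exact h
end

section
/- In any state MV-algebra (A, τ), the image τ(A) is the underlying set of an MV-subalgebra of A. -/
/-- An MV-algebra `(A; ⊕, *, 0)`. -/
class MValgebra (A : Type*) where
  oplus : A → A → A
  star : A → A
  zero : A
  oplus_comm : ∀ x y, oplus x y = oplus y x
  oplus_assoc : ∀ x y z, oplus (oplus x y) z = oplus x (oplus y z)
  oplus_zero : ∀ x, oplus x zero = x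
  star_star : ∀ x, star (star x) = x
  oplus_one : ∀ x, oplus x (star zero) = star zero
  lukasiewicz : ∀ x y, oplus x (star (oplus x (star y))) =
    oplus y (star (oplus y (star x)))

namespace MValgebra

variable {A : Type*} [MValgebra A]

/-- `x ⊙ y := (x* ⊕ y*)*`. -/
def odot (x y : A) : A := star (oplus (star x) (star y))

/-- `1 := 0*`. -/
def one : A := star zero

/-- The natural order: `x ≤ y` iff `x* ⊕ y = 1`. -/
def mvle (x y : A) : Prop := oplus (star x) y = one

/-- A state-operator (internal state) on an MV-algebra. -/
def IsStateOperator (τ : A → A) : Prop :=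
  τ zero = zero ∧
  (∀ x, τ (star x) = star (τ x)) ∧
  (∀ x y, τ (oplus x y) = oplus (τ x) (τ (odot y (star (odot x y))))) ∧
  (∀ x y, τ (oplus (τ x) (τ y)) = oplus (τ x) (τ y))

end MValgebra

open MValgebra in
/-- In any state MV-algebra `(A, τ)`, the image `τ(A)` is the underlying
set of an MV-subalgebra of `A`: it contains `0` and is closed under `⊕` and `*`. -/
theorem state_operator_range_is_subalgebra
    {A : Type*} [MValgebra A] (τ : A → A) (hτ : IsStateOperator τ) :
    (zero : A) ∈ Set.range τ ∧
    (∀ a ∈ Set.range τ, ∀ b ∈ Set.range τ, oplus a b ∈ Set.range τ) ∧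
    (∀ a ∈ Set.range τ, star a ∈ Set.range τ) := by
  obtain ⟨h0, hstar, _, hidem⟩ := hτ
  refine ⟨⟨zero, h0⟩, ?_, ?_⟩
  · rintro a ⟨x, rfl⟩ b ⟨y, rfl⟩
    exact ⟨oplus (τ x) (τ y), hidem x y⟩
  · rintro a ⟨x, rfl⟩
    exact ⟨star x, hstar x⟩
end

section
/- Let B be a Boolean algebra, τ an idempotent Boolean endomorphism of B, and g(F) = τ⁻¹(F) on ultrafilters. Then an ultrafilter F is in the range of g if and only if F ∩ Ker(τ) = ∅, where Ker(τ) = { x ∈ B : τ(x) = 0 }. -/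
/-- An ultrafilter of a Boolean algebra: a proper filter `F` such that for every `x`,
either `x ∈ F` or `xᶜ ∈ F` (equivalently, a maximal proper filter). -/
def IsBAUltrafilter {B : Type*} [BooleanAlgebra B] (F : Set B) : Prop :=
  (⊥ : B) ∉ F ∧ (∀ x ∈ F, ∀ y, x ≤ y → y ∈ F) ∧
  (∀ x ∈ F, ∀ y ∈ F, x ⊓ y ∈ F) ∧ (∀ x : B, x ∈ F ∨ xᶜ ∈ F)

/-- The Stone space `Ω(B)` of a Boolean algebra: the set of its ultrafilters. -/
def StoneSp (B : Type*) [BooleanAlgebra B] := {F : Set B // IsBAUltrafilter F}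

/-- The basic clopen set `u(a) = { F ultrafilter : a ∈ F }`. -/
def basicClopen {B : Type*} [BooleanAlgebra B] (a : B) : Set (StoneSp B) :=
  {F : StoneSp B | a ∈ F.val}

/-- The Stone topology on `Ω(B)`, generated by the sets `u(a)`, `a ∈ B`. -/
instance stoneTopology (B : Type*) [BooleanAlgebra B] : TopologicalSpace (StoneSp B) :=
  TopologicalSpace.generateFrom (Set.range (basicClopen (B := B)))

/-- A bounded lattice hom of Boolean algebras preserves complements. -/
lemma blh_map_compl {B : Type*} [BooleanAlgebra B] (τ : BoundedLatticeHom B B) (x : B) :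
    τ xᶜ = (τ x)ᶜ := by
  have h1 : τ x ⊓ τ xᶜ = ⊥ := by rw [← map_inf, inf_compl_eq_bot, map_bot]
  have h2 : τ x ⊔ τ xᶜ = ⊤ := by rw [← map_sup, sup_compl_eq_top, map_top]
  exact (IsCompl.of_eq h1 h2).compl_eq.symm

/-- With `g(F) = τ⁻¹(F)` on ultrafilters, an ultrafilter `F` is in the
range of `g` iff `F ∩ Ker(τ) = ∅`, where `Ker(τ) = { x : τ x = 0 }`. -/
theorem mem_range_iff_disjoint_kernel
    {B : Type*} [BooleanAlgebra B] (τ : BoundedLatticeHom B B)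
    (hidem : ∀ x, τ (τ x) = τ x)
    (g : StoneSp B → StoneSp B) (hg : ∀ F : StoneSp B, (g F).val = τ ⁻¹' F.val) :
    ∀ F : StoneSp B, F ∈ Set.range g ↔ F.val ∩ {x : B | τ x = ⊥} = ∅ := by
  intro F
  constructor
  · rintro ⟨G, rfl⟩
    rw [hg]
    ext x
    simp only [Set.mem_inter_iff, Set.mem_preimage, Set.mem_setOf_eq, Set.mem_empty_iff_false,
      iff_false, not_and]
    intro hx h0
    rw [h0] at hx
    exact G.2.1 hx
  · intro hdisj
    have hker : ∀ x ∈ F.val, τ x ≠ ⊥ := by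
      intro x hx h0
      exact absurd (Set.eq_empty_iff_forall_notMem.mp hdisj x ⟨hx, h0⟩) (fun h => h)
    refine ⟨F, ?_⟩
    apply Subtype.ext
    rw [hg]
    obtain ⟨hbot, hup, hinf, hultra⟩ := F.2
    ext x
    simp only [Set.mem_preimage]
    constructor
    · intro hτx
      by_contra hx
      have hxc : xᶜ ∈ F.val := (hultra x).resolve_left hx
      have : τ x ⊓ xᶜ ∈ F.val := hinf _ hτx _ hxc
      have h0 : τ (τ x ⊓ xᶜ) = ⊥ := by
        rw [map_inf, hidem, blh_map_compl, inf_compl_eq_bot]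
      exact hker _ this h0
    · intro hx
      by_contra hτx
      have : (τ x)ᶜ ∈ F.val := (hultra (τ x)).resolve_left hτx
      have hm : x ⊓ (τ x)ᶜ ∈ F.val := hinf _ hx _ this
      have h0 : τ (x ⊓ (τ x)ᶜ) = ⊥ := by
        rw [map_inf, blh_map_compl, hidem, inf_compl_eq_bot]
      exact hker _ hm h0
end

section
/- Let A be an MV-algebra and s : A → [0,1] a state. Then s is extremal in the convex set of states if and only if s is a state-morphism, i.e., s(a ⊕ b) = min{ s(a) + s(b), 1 } for all a, b ∈ A. -/
namespace MValgebra

variable {A : Type*} [MValgebra A]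

/-- A state on an MV-algebra: a `[0,1]`-valued map with `s(1)=1` that is additive
on pairs with `a ⊙ b = 0`. -/
def IsState (s : A → ℝ) : Prop :=
  (∀ a, s a ∈ Set.Icc (0 : ℝ) 1) ∧ s one = 1 ∧
  ∀ a b, odot a b = zero → s (oplus a b) = s a + s b

/-- An extremal state: `s = λ s₁ + (1-λ) s₂` with `0 < λ < 1` forces `s₁ = s₂ = s`. -/
def IsExtremalState (s : A → ℝ) : Prop :=
  IsState s ∧
  ∀ s₁ s₂ : A → ℝ, IsState s₁ → IsState s₂ → ∀ l : ℝ, 0 < l → l < 1 →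
    (∀ a, s a = l * s₁ a + (1 - l) * s₂ a) →
    ((∀ a, s₁ a = s a) ∧ (∀ a, s₂ a = s a))

end MValgebra

/-!
Every state satisfies the valuation identity `s (a ⊕ b) + s (a ⊙ b) = s a + s b`.

If `s` is a state-morphism, then for every `a` either `s (a ⊕ a) = 1` or `s (a ⊙ a) = 0`. A
convex component `t` of `s` is `1` where `s` is `1` and `0` where `s` is `0`, so `g = t - s`
satisfies `g b = 2 g a` for `b = a ⊕ a` or `b = a ⊙ a`. A bounded function with this property
is `≤ 0`; applied to `±(t - s)` this gives `t = s`.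

If `s (x ⊕ y) ≠ min (s x + s y) 1`, then `c = x ⊙ y` and `d = (x ⊕ y)*` have positive state
and `c ⊙ n·d = 0` for all `n`. The limit `G z = lim s (z ⊙ n·d)` is additive on orthogonal pairs
with `0 ≤ G ≤ s`, so `s = G 1 • (G / G 1) + (1 - G 1) • ((s - G) / (1 - G 1))`; extremality
forces `G = G 1 • s`, contradicting `G c = 0 < G 1 * s c`. Additivity of `G` is the valuation
identity up to an error bounded by the increments, from `n·d` to `2n·d`, of two convergent
monotone sequences.
-/

namespace MValgebra

open Filter Topology

variable {A : Type*} [MValgebra A]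

instance : Std.Associative (oplus (A := A)) := ⟨oplus_assoc⟩
instance : Std.Commutative (oplus (A := A)) := ⟨oplus_comm⟩

lemma star_one : star (one : A) = zero := star_star zero

lemma oplus_one' (x : A) : oplus x one = one := oplus_one x

lemma one_oplus (x : A) : oplus one x = one := by rw [oplus_comm]; exact oplus_one' x

lemma zero_oplus (x : A) : oplus zero x = x := by rw [oplus_comm]; exact oplus_zero x

lemma oplus_star_self (x : A) : oplus x (star x) = one := by
  have h := lukasiewicz x (one : A)
  rw [star_one, oplus_zero] at h
  rw [h, oplus_comm one (star x), oplus_one', star_one, oplus_zero]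

lemma star_oplus_self (x : A) : oplus (star x) x = one := by
  rw [oplus_comm]; exact oplus_star_self x

lemma star_odot (x y : A) : star (odot x y) = oplus (star x) (star y) := star_star _

lemma odot_star_star (x y : A) : odot (star x) (star y) = star (oplus x y) := by
  rw [odot, star_star, star_star]

lemma odot_comm (x y : A) : odot x y = odot y x := by
  rw [odot, odot, oplus_comm]

lemma one_odot (x : A) : odot one x = x := by
  rw [odot, star_one, zero_oplus, star_star]

lemma odot_zero (x : A) : odot x zero = zero := by
  rw [odot, ← one, oplus_one', star_one]

lemma odot_star_self (x : A) : odot x (star x) = zero := by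
  rw [odot, star_star, star_oplus_self, star_one]

lemma odot_star_oplus_self (x z : A) : odot x (star (oplus x z)) = zero := by
  rw [odot, star_star, ← oplus_assoc, star_oplus_self, one_oplus, star_one]

lemma odot_oplus_star (a b : A) : oplus (odot a b) (star b) = oplus a (star (oplus a b)) := by
  have h := lukasiewicz (star b) a
  rw [star_star b] at h
  rw [odot, oplus_comm _ (star b), oplus_comm (star a) (star b), h]

lemma oplus_oplus_odot (x y : A) : oplus (oplus x y) (odot x y) = oplus x y := by
  have hx : oplus (odot x (star (odot x y))) (odot x y) = x := by
    have h₁ : oplus x (star (odot x y)) = one := by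
      rw [star_odot, ← oplus_assoc, oplus_star_self, one_oplus]
    have h := odot_oplus_star x (star (odot x y))
    rwa [star_star, h₁, star_one, oplus_zero] at h
  have hxy : odot (oplus x y) (star y) = odot x (star (odot x y)) := by
    have h := lukasiewicz y (star x)
    rw [star_star x, oplus_comm y x] at h
    rw [odot, odot, star_star, star_star, oplus_comm (star (oplus x y)) y, h]
    rfl
  have hy : oplus (odot (oplus x y) (star y)) y = oplus x y := by
    have h₁ : oplus (oplus x y) (star y) = one := by rw [oplus_assoc, oplus_star_self, oplus_one']
    have h := odot_oplus_star (oplus x y) (star y)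
    rwa [star_star, h₁, star_one, oplus_zero] at h
  calc oplus (oplus x y) (odot x y)
      = oplus y (oplus (odot (oplus x y) (star y)) (odot x y)) := by
        nth_rewrite 1 [← hy]; ac_rfl
    _ = oplus x y := by rw [hxy, hx, oplus_comm]

lemma mvle_refl (x : A) : mvle x x := star_oplus_self x

lemma mvle_one (x : A) : mvle x one := oplus_one' (star x)

lemma zero_mvle (x : A) : mvle zero x := one_oplus x

lemma mvle_oplus_right (x t : A) : mvle x (oplus x t) := by
  rw [mvle, ← oplus_assoc, star_oplus_self, one_oplus]

lemma mvle_oplus_left (x t : A) : mvle t (oplus x t) := by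
  rw [oplus_comm]; exact mvle_oplus_right t x

lemma oplus_star_oplus_star_of_mvle {x y : A} (h : mvle x y) :
    oplus x (star (oplus x (star y))) = y := by
  have hl := lukasiewicz x y
  rwa [oplus_comm y (star x), h, star_one, oplus_zero] at hl

lemma mvle_iff_exists_oplus {x y : A} : mvle x y ↔ ∃ t, oplus x t = y :=
  ⟨fun h => ⟨_, oplus_star_oplus_star_of_mvle h⟩, fun ⟨t, ht⟩ => ht ▸ mvle_oplus_right x t⟩

lemma mvle_trans {x y z : A} (h₁ : mvle x y) (h₂ : mvle y z) : mvle x z := by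
  obtain ⟨t, rfl⟩ := mvle_iff_exists_oplus.1 h₁
  obtain ⟨u, rfl⟩ := mvle_iff_exists_oplus.1 h₂
  rw [oplus_assoc]; exact mvle_oplus_right x _

lemma eq_zero_of_mvle_zero {x : A} (h : mvle x zero) : x = zero := by
  rw [mvle, oplus_zero] at h
  rw [← star_star x, h, star_one]

lemma oplus_mono_right {y y' : A} (x : A) (h : mvle y y') : mvle (oplus x y) (oplus x y') := by
  obtain ⟨t, rfl⟩ := mvle_iff_exists_oplus.1 h
  rw [← oplus_assoc]; exact mvle_oplus_right _ t

lemma oplus_mono_left {y y' : A} (x : A) (h : mvle y y') : mvle (oplus y x) (oplus y' x) := by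
  rw [oplus_comm y, oplus_comm y']; exact oplus_mono_right x h

lemma star_anti {x y : A} (h : mvle x y) : mvle (star y) (star x) := by
  rw [mvle, star_star, oplus_comm]; exact h

lemma odot_mono_right {y y' : A} (x : A) (h : mvle y y') : mvle (odot x y) (odot x y') :=
  star_anti (oplus_mono_right (star x) (star_anti h))

lemma odot_mono_left {y y' : A} (x : A) (h : mvle y y') : mvle (odot y x) (odot y' x) := by
  rw [odot_comm y, odot_comm y']; exact odot_mono_right x h

lemma odot_mvle_left (x y : A) : mvle (odot x y) x := by
  rw [mvle, star_odot, oplus_assoc, oplus_comm (star y), ← oplus_assoc, star_oplus_self,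
    one_oplus]

lemma odot_mvle_right (x y : A) : mvle (odot x y) y := by
  rw [odot_comm]; exact odot_mvle_left y x

lemma odot_oplus_mvle (a b e : A) : mvle (odot a (oplus b e)) (oplus b (odot a e)) := by
  have key : oplus b (star (oplus b e)) = oplus (star e) (odot e b) := by
    have h := lukasiewicz b (star e)
    rwa [star_star e] at h
  have hae : oplus (oplus (star a) (star e)) (odot a e) = one :=
    oplus_star_self (oplus (star a) (star e))
  rw [mvle, star_odot]
  calc oplus (oplus (star a) (star (oplus b e))) (oplus b (odot a e))
      = oplus (oplus (star a) (odot a e)) (oplus b (star (oplus b e))) := by ac_rfl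
    _ = oplus (oplus (oplus (star a) (star e)) (odot a e)) (odot e b) := by rw [key]; ac_rfl
    _ = one := by rw [hae, one_oplus]

lemma odot_oplus_mvle_oplus_oplus (a b c e : A) :
    mvle (odot (oplus a c) (oplus b e)) (oplus (odot a b) (oplus c e)) := by
  have h₁ : mvle (odot (oplus a c) (oplus b e)) (oplus e (odot (oplus a c) b)) := by
    rw [oplus_comm b e]; exact odot_oplus_mvle (oplus a c) e b
  have h₂ : mvle (odot (oplus a c) b) (oplus c (odot a b)) := by
    rw [odot_comm _ b, odot_comm a, oplus_comm a c]; exact odot_oplus_mvle b c a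
  refine mvle_trans (mvle_trans h₁ (oplus_mono_right e h₂)) ?_
  rw [show oplus e (oplus c (odot a b)) = oplus (odot a b) (oplus c e) by ac_rfl]
  exact mvle_refl _

def nOplus (d : A) : ℕ → A
  | 0 => zero
  | n + 1 => oplus (nOplus d n) d

lemma nOplus_add (d : A) (m n : ℕ) : nOplus d (m + n) = oplus (nOplus d m) (nOplus d n) := by
  induction n with
  | zero => rw [Nat.add_zero, nOplus, oplus_zero]
  | succ n ih => rw [← Nat.add_assoc, nOplus, nOplus, ih, oplus_assoc]

lemma nOplus_mono (d : A) {m n : ℕ} (h : m ≤ n) : mvle (nOplus d m) (nOplus d n) := by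
  obtain ⟨k, rfl⟩ := Nat.exists_eq_add_of_le h
  rw [nOplus_add]; exact mvle_oplus_right _ _

lemma nOplus_mvle_of_oplus_eq {d z : A} (h : oplus z d = z) : ∀ n, mvle (nOplus d n) z
  | 0 => zero_mvle z
  | n + 1 => by
    have := oplus_mono_left d (nOplus_mvle_of_oplus_eq h n)
    rwa [h] at this

def OrthoAdditive (g : A → ℝ) : Prop :=
  ∀ a b, odot a b = zero → g (oplus a b) = g a + g b

namespace OrthoAdditive

variable {g : A → ℝ} (hg : OrthoAdditive g)
include hg

lemma map_zero : g zero = 0 := by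
  have h := hg zero zero (odot_zero zero)
  rw [oplus_zero] at h
  linarith

lemma map_oplus_add_map_odot (x y : A) : g (oplus x y) + g (odot x y) = g x + g y := by
  have e₁ := hg x _ (odot_star_oplus_self x (star (oplus x y)))
  have e₂ := hg (odot x y) _ (odot_star_oplus_self (odot x y) (star y))
  rw [oplus_star_oplus_star_of_mvle (mvle_oplus_right x y), ← odot_oplus_star] at e₁
  rw [oplus_star_oplus_star_of_mvle (odot_mvle_right x y)] at e₂
  linarith

lemma mono (hg₀ : ∀ a, 0 ≤ g a) {x y : A} (h : mvle x y) : g x ≤ g y := by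
  have e := hg x _ (odot_star_oplus_self x (star y))
  rw [oplus_star_oplus_star_of_mvle h] at e
  linarith [hg₀ (star (oplus x (star y)))]

lemma isState_div_map_one (hg₀ : ∀ a, 0 ≤ g a) (hpos : 0 < g one) :
    IsState fun a => g a / g one :=
  ⟨fun a => ⟨div_nonneg (hg₀ a) hpos.le, div_le_one_of_le₀ (hg.mono hg₀ (mvle_one a)) hpos.le⟩,
    div_self hpos.ne', fun a b h => by simp only [hg a b h, add_div]⟩

end OrthoAdditive

namespace IsState

variable {s : A → ℝ} (hs : IsState s)
include hs

lemma nonneg (a : A) : 0 ≤ s a := (hs.1 a).1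

lemma le_one (a : A) : s a ≤ 1 := (hs.1 a).2

lemma map_one : s one = 1 := hs.2.1

lemma orthoAdditive : OrthoAdditive s := hs.2.2

lemma mono {x y : A} (h : mvle x y) : s x ≤ s y := hs.orthoAdditive.mono hs.nonneg h

lemma map_star (x : A) : s (star x) = 1 - s x := by
  have h := hs.orthoAdditive x (star x) (odot_star_self x)
  rw [oplus_star_self, hs.map_one] at h
  linarith

lemma map_oplus_eq_min_iff (a b : A) :
    s (oplus a b) = min (s a + s b) 1 ↔ s (oplus a b) = 1 ∨ s (odot a b) = 0 := by
  have v := hs.orthoAdditive.map_oplus_add_map_odot a b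
  have h₀ := hs.nonneg (odot a b)
  have h₁ := hs.le_one (oplus a b)
  rcases le_total (s a + s b) 1 with h | h
  · rw [min_eq_left h]; constructor
    · exact fun e => Or.inr (by linarith)
    · rintro (e | e) <;> linarith
  · rw [min_eq_right h]; constructor
    · exact Or.inl
    · rintro (e | e) <;> linarith

end IsState

lemma nonpos_of_forall_exists_two_mul_le {α : Type*} {g : α → ℝ} (hbdd : BddAbove (Set.range g))
    (h : ∀ a, ∃ b, 2 * g a ≤ g b) (a : α) : g a ≤ 0 := by
  have : Nonempty α := ⟨a⟩
  have hhalf : ∀ x, g x ≤ (⨆ y, g y) / 2 := fun x => by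
    obtain ⟨b, hb⟩ := h x
    linarith [le_ciSup hbdd b]
  linarith [hhalf a, ciSup_le hhalf]

lemma IsState.eq_of_eq_zero_of_eq_one {s t : A → ℝ} (hs : IsState s) (ht : IsState t)
    (hdich : ∀ a, s (oplus a a) = 1 ∨ s (odot a a) = 0)
    (h₀ : ∀ a, s a = 0 → t a = 0) (h₁ : ∀ a, s a = 1 → t a = 1) (a : A) : t a = s a := by
  have hdouble : ∀ a, ∃ b, 2 * (t a - s a) = t b - s b := fun a => by
    have v := hs.orthoAdditive.map_oplus_add_map_odot a a
    have w := ht.orthoAdditive.map_oplus_add_map_odot a a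
    rcases hdich a with e | e
    · exact ⟨odot a a, by linarith [h₁ _ e]⟩
    · exact ⟨oplus a a, by linarith [h₀ _ e]⟩
  have hle := nonpos_of_forall_exists_two_mul_le (g := fun a => t a - s a)
    ⟨1, by rintro _ ⟨b, rfl⟩; linarith [ht.le_one b, hs.nonneg b]⟩
    (fun a => (hdouble a).imp fun _ hb => hb.le) a
  have hge := nonpos_of_forall_exists_two_mul_le (g := fun a => s a - t a)
    ⟨1, by rintro _ ⟨b, rfl⟩; linarith [hs.le_one b, ht.nonneg b]⟩
    (fun a => (hdouble a).imp fun _ hb => by linarith) a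
  linarith

lemma IsState.eq_of_eq_mul_add_mul {s t u : A → ℝ} (hs : IsState s) (ht : IsState t)
    (hu : IsState u) (hdich : ∀ a, s (oplus a a) = 1 ∨ s (odot a a) = 0) {l : ℝ} (hl₀ : 0 < l)
    (hl₁ : l ≤ 1) (h : ∀ a, s a = l * t a + (1 - l) * u a) (a : A) : t a = s a := by
  refine hs.eq_of_eq_zero_of_eq_one ht hdich (fun b hb => ?_) (fun b hb => ?_) a
  · nlinarith [h b, ht.nonneg b, hu.nonneg b]
  · nlinarith [h b, ht.le_one b, hu.le_one b]

lemma IsState.isExtremalState_of_map_oplus {s : A → ℝ} (hs : IsState s)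
    (hm : ∀ a b, s (oplus a b) = min (s a + s b) 1) : IsExtremalState s := by
  have hdich a := (hs.map_oplus_eq_min_iff a a).1 (hm a a)
  refine ⟨hs, fun s₁ s₂ h₁ h₂ l hl₀ hl₁ h => ⟨?_, ?_⟩⟩
  · exact hs.eq_of_eq_mul_add_mul h₁ h₂ hdich hl₀ hl₁.le h
  · exact hs.eq_of_eq_mul_add_mul h₂ h₁ hdich (l := 1 - l) (by linarith) (by linarith)
      fun a => by rw [h a]; ring

lemma IsExtremalState.eq_mul_of_le {s g : A → ℝ} (hs : IsExtremalState s) (hg : OrthoAdditive g)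
    (hg₀ : ∀ a, 0 ≤ g a) (hgs : ∀ a, g a ≤ s a) (a : A) : g a = g one * s a := by
  have hst := hs.1
  have hsg : OrthoAdditive fun a => s a - g a := fun a b h => by
    simp only [hst.orthoAdditive a b h, hg a b h]; ring
  have hsg₀ : ∀ a, 0 ≤ s a - g a := fun a => sub_nonneg.2 (hgs a)
  have hg₁ := hgs one
  rw [hst.map_one] at hg₁
  rcases (hg₀ one).eq_or_lt with hzero | hpos
  · have := hg.mono hg₀ (mvle_one a)
    rw [← hzero, zero_mul]; linarith [hg₀ a]
  rcases hg₁.eq_or_lt with hone | hlt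
  · have := hsg.mono hsg₀ (mvle_one a)
    rw [hone, one_mul]; simp only [hst.map_one, hone] at this; linarith [hsg₀ a]
  have h₁ := hg.isState_div_map_one hg₀ hpos
  have h₂ : IsState fun a => (s a - g a) / (1 - g one) := by
    simpa only [hst.map_one] using hsg.isState_div_map_one hsg₀ (by linarith [hst.map_one])
  have := (hs.2 _ _ h₁ h₂ (g one) hpos hlt fun a => by field_simp; ring).1 a
  field_simp at this; linarith

lemma tendsto_comp_two_mul_sub {G : Type*} [TopologicalSpace G] [AddGroup G]
    [IsTopologicalAddGroup G] {a : ℕ → G} {L : G} (h : Tendsto a atTop (𝓝 L)) :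
    Tendsto (fun n => a (2 * n) - a n) atTop (𝓝 0) := by
  simpa using (h.comp (tendsto_id.const_mul_atTop' two_pos)).sub h

/-- The functional `G` above: the sequence is monotone in `n`, so its supremum is its limit. -/
noncomputable def idealPart (s : A → ℝ) (d z : A) : ℝ := ⨆ n, s (odot z (nOplus d n))

namespace IsState

variable {s : A → ℝ} (hs : IsState s)
include hs

lemma bddAbove_range (e : ℕ → A) : BddAbove (Set.range fun n => s (e n)) :=
  ⟨1, by rintro _ ⟨n, rfl⟩; exact hs.le_one _⟩

lemma tendsto_ciSup {e : ℕ → A} (he : ∀ {m n}, m ≤ n → mvle (e m) (e n)) :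
    Tendsto (fun n => s (e n)) atTop (𝓝 (⨆ n, s (e n))) :=
  tendsto_atTop_ciSup (fun _ _ h => hs.mono (he h)) (hs.bddAbove_range e)

lemma tendsto_idealPart (d z : A) :
    Tendsto (fun n => s (odot z (nOplus d n))) atTop (𝓝 (idealPart s d z)) :=
  hs.tendsto_ciSup fun h => odot_mono_right z (nOplus_mono d h)

lemma map_odot_nOplus_le_idealPart (d z : A) (n : ℕ) :
    s (odot z (nOplus d n)) ≤ idealPart s d z :=
  le_ciSup (hs.bddAbove_range fun n => odot z (nOplus d n)) n

lemma idealPart_nonneg (d z : A) : 0 ≤ idealPart s d z :=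
  (hs.nonneg _).trans (hs.map_odot_nOplus_le_idealPart d z 0)

lemma idealPart_le (d z : A) : idealPart s d z ≤ s z :=
  ciSup_le fun _ => hs.mono (odot_mvle_left z _)

lemma map_le_idealPart_one (d : A) : s d ≤ idealPart s d one := by
  simpa only [one_odot, nOplus, zero_oplus] using hs.map_odot_nOplus_le_idealPart d one 1

lemma idealPart_eq_zero {c d : A} (h : oplus (star c) d = star c) : idealPart s d c = 0 := by
  have hcd n : odot c (nOplus d n) = zero := eq_zero_of_mvle_zero <| by
    simpa only [odot_star_self] using odot_mono_right c (nOplus_mvle_of_oplus_eq h n)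
  simp only [idealPart, hcd, hs.orthoAdditive.map_zero, ciSup_const]

lemma abs_map_odot_oplus_sub_le {p q : A} (hpq : odot p q = zero) (e : A) :
    |s (odot (oplus p q) e) - (s (odot p e) + s (odot q e))| ≤
      (s (oplus (oplus p q) (oplus e e)) - s (oplus (oplus p q) e)) + (s (oplus e e) - s e) := by
  have hv := hs.orthoAdditive.map_oplus_add_map_odot
  have v₁ := hv (oplus p q) e
  have v₂ := hv p e
  have v₃ := hv q e
  have v₄ := hv (oplus p e) (oplus q e)
  have v₅ := hv e e
  rw [show oplus (oplus p e) (oplus q e) = oplus (oplus p q) (oplus e e) by ac_rfl] at v₄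
  have hadd := hs.orthoAdditive p q hpq
  have hup : s (odot (oplus p e) (oplus q e)) ≤ s (oplus e e) := hs.mono <| by
    simpa only [hpq, zero_oplus] using odot_oplus_mvle_oplus_oplus p q e e
  have hlo : s (odot e e) ≤ s (odot (oplus p e) (oplus q e)) := hs.mono <|
    mvle_trans (odot_mono_left e (mvle_oplus_left p e)) (odot_mono_right _ (mvle_oplus_left q e))
  have hmono : s (oplus (oplus p q) e) ≤ s (oplus (oplus p q) (oplus e e)) :=
    hs.mono (oplus_mono_right _ (mvle_oplus_right e e))
  rw [abs_le]; constructor <;> linarith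

lemma idealPart_orthoAdditive (d : A) : OrthoAdditive (idealPart s d) := by
  intro p q hpq
  have hdouble n : oplus (nOplus d n) (nOplus d n) = nOplus d (2 * n) := by
    rw [two_mul, nOplus_add]
  have herr : Tendsto (fun n =>
      (s (oplus (oplus p q) (nOplus d (2 * n))) - s (oplus (oplus p q) (nOplus d n))) +
        (s (nOplus d (2 * n)) - s (nOplus d n))) atTop (𝓝 0) := by
    simpa using (tendsto_comp_two_mul_sub (hs.tendsto_ciSup fun h =>
      oplus_mono_right (oplus p q) (nOplus_mono d h))).add
      (tendsto_comp_two_mul_sub (hs.tendsto_ciSup fun h => nOplus_mono d h))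
  have hdiff : Tendsto (fun n => s (odot (oplus p q) (nOplus d n)) -
      (s (odot p (nOplus d n)) + s (odot q (nOplus d n)))) atTop (𝓝 0) :=
    squeeze_zero_norm (fun n => by
      simpa only [Real.norm_eq_abs, hdouble] using hs.abs_map_odot_oplus_sub_le hpq (nOplus d n))
      herr
  have hlim := (hs.tendsto_idealPart d (oplus p q)).sub
    ((hs.tendsto_idealPart d p).add (hs.tendsto_idealPart d q))
  linarith [tendsto_nhds_unique hlim hdiff]

end IsState

lemma IsExtremalState.map_oplus {s : A → ℝ} (hs : IsExtremalState s) (x y : A) :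
    s (oplus x y) = min (s x + s y) 1 := by
  have hst := hs.1
  rw [hst.map_oplus_eq_min_iff]
  by_contra! h
  have hc : 0 < s (odot x y) := (hst.nonneg _).lt_of_ne' h.2
  have hd : 0 < s (star (oplus x y)) := by
    rw [hst.map_star]; linarith [(hst.le_one _).lt_of_ne h.1]
  have habs : oplus (star (odot x y)) (star (oplus x y)) = star (odot x y) := by
    rw [star_odot, ← odot_star_star]; exact oplus_oplus_odot _ _
  have hG := hs.eq_mul_of_le (hst.idealPart_orthoAdditive (star (oplus x y)))
    (hst.idealPart_nonneg _) (hst.idealPart_le _) (odot x y)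
  rw [hst.idealPart_eq_zero habs] at hG
  nlinarith [hst.map_le_idealPart_one (star (oplus x y))]

end MValgebra

open MValgebra in
/-- A state on an MV-algebra is extremal iff it is a state-morphism,
i.e. `s(a ⊕ b) = min (s a + s b) 1` for all `a, b`. -/
theorem extremal_state_iff_state_morphism
    {A : Type*} [MValgebra A] (s : A → ℝ) (hs : IsState s) :
    IsExtremalState s ↔ ∀ a b : A, s (oplus a b) = min (s a + s b) 1 :=
  ⟨fun h => h.map_oplus, hs.isExtremalState_of_map_oplus⟩
end

section
/- Let Ω be a compact Hausdorff space. Then the ℓ-group C(Ω) of continuous real-valued functions on Ω is Dedekind σ-complete if and only if Ω is basically disconnected. -/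
open Set

/-- A topological space is basically disconnected if the closure of every open
`F_σ` subset is open. -/
def BasicallyDisconnected (X : Type*) [TopologicalSpace X] : Prop :=
  ∀ U : Set X, IsOpen U →
    (∃ F : ℕ → Set X, (∀ n, IsClosed (F n)) ∧ U = ⋃ n, F n) →
    IsOpen (closure U)

section Backward

variable {Ω : Type*} [TopologicalSpace Ω] [CompactSpace Ω] [T2Space Ω]

/-- If `Ω` is basically disconnected, a countable bounded family in `C(Ω,ℝ)` has a LUB. -/
theorem exists_isLUB_of_basicallyDisconnected (hBD : BasicallyDisconnected Ω)
    (e : ℕ → C(Ω, ℝ)) (b : C(Ω, ℝ)) (hb : ∀ n, e n ≤ b) :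
    ∃ f : C(Ω, ℝ), IsLUB (Set.range e) f := by
  -- upper bound M for b
  obtain ⟨M, hM⟩ : ∃ M : ℝ, ∀ y : Ω, b y ≤ M := by
    rcases isEmpty_or_nonempty Ω with h | h
    · exact ⟨0, fun y => (IsEmpty.false y).elim⟩
    · obtain ⟨x, -, hx⟩ := isCompact_univ.exists_isMaxOn univ_nonempty
        (b.continuous.continuousOn)
      exact ⟨b x, fun y => hx (mem_univ y)⟩
  set U : ℝ → Set Ω := fun r => {y | ∃ n, r < e n y} with hU
  have hUopen : ∀ r, IsOpen (U r) := by
    intro r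
    have : U r = ⋃ n, (e n) ⁻¹' (Ioi r) := by
      ext y; simp [hU, mem_iUnion]
    rw [this]
    exact isOpen_iUnion fun n => (e n).continuous.isOpen_preimage _ isOpen_Ioi
  have hUFσ : ∀ r, ∃ F : ℕ → Set Ω, (∀ n, IsClosed (F n)) ∧ U r = ⋃ n, F n := by
    intro r
    refine ⟨fun m => {y | r + 1 / (m.unpair.2 + 1) ≤ e m.unpair.1 y}, fun m => ?_, ?_⟩
    · exact isClosed_le continuous_const (e m.unpair.1).continuous
    · ext y
      simp only [hU, mem_setOf_eq, mem_iUnion]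
      constructor
      · rintro ⟨n, hn⟩
        obtain ⟨k, hk⟩ := exists_nat_one_div_lt (sub_pos.2 hn)
        exact ⟨Nat.pair n k, by simp only [Nat.unpair_pair]; linarith⟩
      · rintro ⟨m, hm⟩
        refine ⟨m.unpair.1, lt_of_lt_of_le ?_ hm⟩
        have : (0:ℝ) < 1 / ((m.unpair.2 : ℝ) + 1) := by positivity
        linarith
  set K : ℝ → Set Ω := fun r => closure (U r) with hK
  have hKopen : ∀ r, IsOpen (K r) := fun r => hBD (U r) (hUopen r) (hUFσ r)
  have hKmono : ∀ {r s : ℝ}, r ≤ s → K s ⊆ K r := by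
    intro r s hrs
    exact closure_mono fun y ⟨n, hn⟩ => ⟨n, lt_of_le_of_lt hrs hn⟩
  set A : Ω → Set ℝ := fun x => {r : ℝ | x ∈ K r} with hA
  have hAne : ∀ x, (A x).Nonempty := by
    intro x
    exact ⟨e 0 x - 1, subset_closure ⟨0, by linarith⟩⟩
  have hAbdd : ∀ x, BddAbove (A x) := by
    intro x
    refine ⟨M, fun r hr => ?_⟩
    have hne : (U r).Nonempty := by
      by_contra h
      rw [not_nonempty_iff_eq_empty] at h
      have : K r = ∅ := by rw [hK]; simp [h]
      rw [hA] at hr; simp only [mem_setOf_eq] at hr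
      rw [this] at hr; exact hr
    obtain ⟨y, n, hn⟩ := hne
    exact le_of_lt (lt_of_lt_of_le hn (le_trans (ContinuousMap.le_def.1 (hb n) y) (hM y)))
  set g : Ω → ℝ := fun x => sSup (A x) with hg
  -- g bounds: membership gives lower bounds
  have hmem_le : ∀ {x r}, r ∈ A x → r ≤ g x := fun {x r} hr => le_csSup (hAbdd x) hr
  have hle_of_notmem : ∀ {x r}, x ∉ K r → g x ≤ r := by
    intro x r hx
    refine csSup_le (hAne x) fun s hs => ?_
    by_contra h
    push_neg at h
    exact hx (hKmono (le_of_lt h) hs)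
  have hge_on_K : ∀ {x r}, x ∈ K r → r ≤ g x := fun {x r} hx => hmem_le hx
  -- continuity of g
  have hgcont : Continuous g := by
    rw [continuous_iff_continuousAt]
    intro x
    rw [ContinuousAt, Metric.tendsto_nhds]
    intro ε hε
    -- upper control: x ∉ K (g x + ε/2)
    have hx1 : x ∉ K (g x + ε / 2) := by
      intro hx
      have := hge_on_K hx
      linarith
    -- lower control: some r ∈ A x with r > g x - ε
    obtain ⟨r, hrA, hrgt⟩ : ∃ r ∈ A x, g x - ε < r :=
      exists_lt_of_lt_csSup (hAne x) (by linarith)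
    have hV : (K (g x + ε / 2))ᶜ ∩ K r ∈ nhds x := by
      refine Filter.inter_mem ?_ ?_
      · exact (isClosed_closure.isOpen_compl).mem_nhds hx1
      · exact (hKopen r).mem_nhds hrA
    filter_upwards [hV] with y ⟨hy1, hy2⟩
    have h1 : g y ≤ g x + ε / 2 := hle_of_notmem hy1
    have h2 : r ≤ g y := hge_on_K hy2
    rw [Real.dist_eq, abs_lt]
    constructor <;> linarith
  refine ⟨⟨g, hgcont⟩, ?_, ?_⟩
  · -- upper bound
    rintro f ⟨n, rfl⟩
    rw [ContinuousMap.le_def]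
    intro x
    simp only [ContinuousMap.coe_mk]
    refine le_of_forall_pos_le_add fun ε hε => ?_
    have : e n x - ε ∈ A x := subset_closure ⟨n, by linarith⟩
    have := hmem_le this
    linarith
  · -- least
    intro u hu
    rw [ContinuousMap.le_def]
    intro x
    simp only [ContinuousMap.coe_mk]
    refine csSup_le (hAne x) fun r hr => ?_
    have hsub : K r ⊆ {y | r ≤ u y} := by
      refine closure_minimal ?_ (isClosed_le continuous_const u.continuous)
      rintro y ⟨n, hn⟩
      exact le_of_lt (lt_of_lt_of_le hn (ContinuousMap.le_def.1 (hu ⟨n, rfl⟩) y))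
    exact hsub hr

end Backward

/-- For a compact Hausdorff space `Ω`, the lattice-ordered group
`C(Ω, ℝ)` is Dedekind σ-complete (every nonempty countable subset bounded above
has a supremum) iff `Ω` is basically disconnected. -/
theorem continuousFunctions_dedekind_sigma_complete_iff_basically_disconnected
    {Ω : Type*} [TopologicalSpace Ω] [CompactSpace Ω] [T2Space Ω] :
    (∀ S : Set C(Ω, ℝ), S.Countable → S.Nonempty → BddAbove S →
      ∃ f : C(Ω, ℝ), IsLUB S f) ↔ BasicallyDisconnected Ω := by
  constructor
  · intro hcomp V hVopen hFσ
    obtain ⟨F, hFcl, hVF⟩ := hFσ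
    have hFV : ∀ n, F n ⊆ V := fun n => hVF ▸ subset_iUnion F n
    have hUry : ∀ n : ℕ, ∃ f : C(Ω, ℝ), EqOn f 0 Vᶜ ∧ EqOn f 1 (F n) ∧
        ∀ x, f x ∈ Icc (0:ℝ) 1 := fun n =>
      exists_continuous_zero_one_of_isClosed (isClosed_compl_iff.2 hVopen) (hFcl n)
        (Set.disjoint_compl_left_iff_subset.2 (hFV n))
    choose f hf0 hf1 hf01 using hUry
    obtain ⟨g, hg⟩ := hcomp (Set.range f) (countable_range f) (range_nonempty f)
      ⟨(1 : C(Ω, ℝ)), by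
        rintro u ⟨n, rfl⟩
        rw [ContinuousMap.le_def]
        intro x
        exact (hf01 n x).2⟩
    have hgub : ∀ n x, f n x ≤ g x := fun n x =>
      ContinuousMap.le_def.1 (hg.1 ⟨n, rfl⟩) x
    have hgle1 : ∀ x, g x ≤ 1 := by
      intro x
      have : g ≤ (1 : C(Ω, ℝ)) := hg.2 (by
        rintro u ⟨n, rfl⟩
        rw [ContinuousMap.le_def]
        intro y
        exact (hf01 n y).2)
      exact ContinuousMap.le_def.1 this x
    -- g = 1 on closure V
    have hg1 : ∀ x ∈ closure V, g x = 1 := by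
      have hcl : closure V ⊆ {x | g x = 1} := by
        refine closure_minimal ?_ ?_
        · intro x hx
          rw [hVF] at hx
          obtain ⟨s, ⟨n, rfl⟩, hxs⟩ := hx
          have hfx : f n x = 1 := by simpa using hf1 n hxs
          have h1 : (1:ℝ) ≤ g x := hfx ▸ hgub n x
          exact le_antisymm (hgle1 x) h1
        · have : {x | g x = 1} = {x | (1:ℝ) ≤ g x} ∩ {x | g x ≤ 1} := by
            ext x; simp only [mem_setOf_eq, mem_inter_iff]
            exact ⟨fun h => ⟨h.ge, h.le⟩, fun ⟨h1, h2⟩ => le_antisymm h2 h1⟩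
          rw [this]
          exact (isClosed_le continuous_const g.continuous).inter
            (isClosed_le g.continuous continuous_const)
      exact fun x hx => hcl hx
    -- g ≤ 0 outside closure V
    have hg0 : ∀ x, x ∉ closure V → g x ≤ 0 := by
      intro x hx
      by_contra h
      push_neg at h
      -- Urysohn: ψ = 0 on closure V, ψ x = 1
      obtain ⟨ψ, hψ0, hψ1, hψ01⟩ :=
        exists_continuous_zero_one_of_isClosed isClosed_closure (isClosed_singleton (x := x))
          (disjoint_singleton_right.2 hx)
      set c := g x with hc
      set φ : C(Ω, ℝ) := g ⊓ (ContinuousMap.const Ω c * ψ) with hφ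
      have hφle : ∀ y, φ y ≤ g y := fun y => by
        simp only [hφ, ContinuousMap.inf_apply]
        exact min_le_left _ _
      have hφ0 : ∀ y ∈ closure V, φ y = min (g y) 0 := by
        intro y hy
        simp only [hφ, ContinuousMap.inf_apply, ContinuousMap.mul_apply,
          ContinuousMap.const_apply]
        rw [hψ0 hy]
        simp
      have hub : g - φ ∈ upperBounds (Set.range f) := by
        rintro u ⟨n, rfl⟩
        rw [ContinuousMap.le_def]
        intro y
        simp only [ContinuousMap.sub_apply]
        by_cases hy : y ∈ closure V
        · have := hφ0 y hy
          rw [this]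
          have h1 : min (g y) 0 ≤ 0 := min_le_right _ _
          have := hgub n y
          linarith
        · -- f n y = 0 and φ y ≤ g y
          have hfn0 : f n y = 0 := by
            have : y ∈ Vᶜ := fun hyV => hy (subset_closure hyV)
            have := hf0 n this
            simpa using this
          rw [hfn0]
          linarith [hφle y]
      have hgle : g ≤ g - φ := hg.2 hub
      have : φ x ≤ 0 := by
        have := ContinuousMap.le_def.1 hgle x
        simp only [ContinuousMap.sub_apply] at this
        linarith
      have hφx : φ x = c := by
        simp only [hφ, ContinuousMap.inf_apply, ContinuousMap.mul_apply,
          ContinuousMap.const_apply]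
        rw [hψ1 rfl]
        simp [hc]
      rw [hφx] at this
      exact absurd this (not_le.2 h)
    -- closure V = {x | 1/2 < g x}
    have hkey : closure V = g ⁻¹' (Ioi (1/2 : ℝ)) := by
      ext x
      simp only [mem_preimage, mem_Ioi]
      constructor
      · intro hx
        rw [hg1 x hx]; norm_num
      · intro hx
        by_contra h
        have := hg0 x h
        linarith
    rw [hkey]
    exact g.continuous.isOpen_preimage _ isOpen_Ioi
  · intro hBD S hScount hSne hSbdd
    obtain ⟨e, rfl⟩ := hScount.exists_eq_range hSne
    obtain ⟨b, hb⟩ := hSbdd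
    exact exists_isLUB_of_basicallyDisconnected hBD e b fun n => hb ⟨n, rfl⟩
end
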